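/- For a permutation π of {1,…,n} chosen uniformly at random (n ≥ 1), the probability that the permutation game (I, I^π) has exactly one Nash equilibrium equals 1/n. Equivalently, the number of permutations of {1,…,n} consisting of a single cycle (one orbit on {1,…,n}) is (n−1)!. -/

import Mathlib

open Matrix BigOperators

/-- A mixed strategy: nonnegative entries summing to 1. -/
def IsMixed {I : Type*} [Fintype I] (x : I → ℝ) : Prop :=
  (∀ i, 0 ≤ x i) ∧ ∑ i, x i = 1

/-- `(x, y)` is a Nash equilibrium of the bimatrix game `(A, B)`. -/
def IsNash {I J : Type*} [Fintype I] [Fintype J]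
    (A B : Matrix I J ℝ) (x : I → ℝ) (y : J → ℝ) : Prop :=
  IsMixed x ∧ IsMixed y ∧
  (∀ x' : I → ℝ, IsMixed x' → x' ⬝ᵥ (A *ᵥ y) ≤ x ⬝ᵥ (A *ᵥ y)) ∧
  (∀ y' : J → ℝ, IsMixed y' → x ⬝ᵥ (B *ᵥ y') ≤ x ⬝ᵥ (B *ᵥ y))

/-- The matrix `I^π` whose `i`-th row is the transpose of the `π(i)`-th
standard unit vector. -/
def permMatrix {n : ℕ} (π : Equiv.Perm (Fin n)) : Matrix (Fin n) (Fin n) ℝ :=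
  Matrix.of fun i j => if j = π i then 1 else 0

/-- The number of orbits of `π` on `{1,…,n}` (cycles of `π`, including fixed
points): the number of distinct `SameCycle`-classes. -/
noncomputable def numOrbits {n : ℕ} (π : Equiv.Perm (Fin n)) : ℕ :=
  {s : Set (Fin n) | ∃ i, s = {j | π.SameCycle i j}}.ncard

/-!
A mixed strategy is a best response to a payoff vector `v` iff it is supported on the
maximizers of `v`. In the game `(I, I^π)` the row player's payoff vector is `y` and the column
player's is `x ∘ π⁻¹`, so the uniform distribution on any `π`-invariant set is a symmetric
equilibrium: if `π` has two orbits, the orbit of a point and the whole space give two distinct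
equilibria. Conversely, if `π` is a single cycle, the maximizers of `y` in an equilibrium form a
nonempty `π⁻¹`-invariant set, hence everything; so `y` is uniform, and then so is `x`.
Finally, for `n ≥ 2` the single-cycle permutations are those of cycle type `{n}`, and there are
`(n - 1)!` of them.
-/

open Equiv Finset

section BestResponse

variable {ι : Type*} [Fintype ι]

lemma IsMixed.dotProduct_le {x v : ι → ℝ} (hx : IsMixed x) {M : ℝ} (h : ∀ a, v a ≤ M) :
    x ⬝ᵥ v ≤ M :=
  calc x ⬝ᵥ v ≤ ∑ a, x a * M := sum_le_sum fun a _ => mul_le_mul_of_nonneg_left (h a) (hx.1 a)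
    _ = M := by rw [← sum_mul, hx.2, one_mul]

lemma IsMixed.exists_pos {x : ι → ℝ} (hx : IsMixed x) : ∃ a, 0 < x a := by
  by_contra! h
  linarith [sum_nonpos fun a (_ : a ∈ univ) => h a, hx.2]

lemma isMixed_single [DecidableEq ι] (a : ι) : IsMixed (Pi.single a (1 : ℝ)) :=
  ⟨fun b => by by_cases h : b = a <;> simp [h], by simp⟩

lemma IsMixed.forall_dotProduct_le_iff {x v : ι → ℝ} (hx : IsMixed x) :
    (∀ x', IsMixed x' → x' ⬝ᵥ v ≤ x ⬝ᵥ v) ↔ ∀ a, 0 < x a → ∀ b, v b ≤ v a := by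
  classical
  constructor
  · intro hbr a ha b
    obtain ⟨c, -, hc⟩ := exists_max_image univ v ⟨a, mem_univ a⟩
    have hterm : ∀ d ∈ univ, x d * (v d - v c) ≤ 0 := fun d _ =>
      mul_nonpos_of_nonneg_of_nonpos (hx.1 d) (sub_nonpos.mpr (hc d (mem_univ d)))
    -- the pure strategy on the maximizer `c` is no better than `x`
    have hsum : ∑ d, x d * (v d - v c) = 0 := by
      refine le_antisymm (sum_nonpos hterm) ?_
      have := hbr _ (isMixed_single c)
      simp only [single_dotProduct, one_mul] at this
      simp only [mul_sub, sum_sub_distrib, ← sum_mul, hx.2, one_mul]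
      exact sub_nonneg.mpr this
    have hac := (sum_eq_zero_iff_of_nonpos hterm).mp hsum a (mem_univ a)
    rw [mul_eq_zero, sub_eq_zero] at hac
    exact hac.resolve_left ha.ne' ▸ hc b (mem_univ b)
  · intro hsupp x' hx'
    obtain ⟨a, ha⟩ := hx.exists_pos
    have hval : x ⬝ᵥ v = v a := by
      calc x ⬝ᵥ v = ∑ c, x c * v a := sum_congr rfl fun c _ => by
              rcases (hx.1 c).eq_or_lt with hc | hc
              · simp [← hc]
              · rw [le_antisymm (hsupp c hc a) (hsupp a ha c)]
        _ = v a := by rw [← sum_mul, hx.2, one_mul]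
    exact hval ▸ hx'.dotProduct_le (hsupp a ha)

end BestResponse

section Uniform

variable {ι : Type*} [DecidableEq ι]

noncomputable def uniformStrategy (S : Finset ι) : ι → ℝ :=
  fun a => if a ∈ S then (#S : ℝ)⁻¹ else 0

lemma uniformStrategy_pos_iff {S : Finset ι} {a : ι} : 0 < uniformStrategy S a ↔ a ∈ S := by
  unfold uniformStrategy
  split_ifs with ha
  · simp [ha, card_pos.mpr ⟨a, ha⟩]
  · simp [ha]

lemma uniformStrategy_le {S : Finset ι} {b : ι} (hb : b ∈ S) (a : ι) :
    uniformStrategy S a ≤ uniformStrategy S b := by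
  unfold uniformStrategy
  split_ifs <;> simp

lemma isMixed_uniformStrategy [Fintype ι] {S : Finset ι} (hS : S.Nonempty) :
    IsMixed (uniformStrategy S) :=
  ⟨fun a => by unfold uniformStrategy; split_ifs <;> positivity, by
    simp [uniformStrategy, sum_ite_mem, card_ne_zero.mpr hS]⟩

lemma IsMixed.eq_uniformStrategy_univ [Fintype ι] {x : ι → ℝ} (hx : IsMixed x)
    (hconst : ∀ a b, x a ≤ x b) :
    x = uniformStrategy univ := by
  obtain ⟨a, -⟩ := hx.exists_pos
  have hsum : (Fintype.card ι : ℝ) * x a = 1 := by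
    rw [← hx.2, sum_congr rfl fun b _ => le_antisymm (hconst b a) (hconst a b)]
    simp
  funext b
  rw [le_antisymm (hconst b a) (hconst a b)]
  simp [uniformStrategy, eq_inv_of_mul_eq_one_right hsum]

end Uniform

section PermGame

variable {n : ℕ} {π : Perm (Fin n)}

lemma permMatrix_eq_toMatrix (π : Perm (Fin n)) : permMatrix π = π.toPEquiv.toMatrix := by
  ext i j
  simp [permMatrix, eq_comm]

lemma isNash_permMatrix_iff {x y : Fin n → ℝ} :
    IsNash 1 (permMatrix π) x y ↔ IsMixed x ∧ IsMixed y ∧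
      (∀ a, 0 < x a → ∀ b, y b ≤ y a) ∧ (∀ c, 0 < y c → ∀ d, x (π.symm d) ≤ x (π.symm c)) := by
  have hpayoff : ∀ y', x ⬝ᵥ (permMatrix π *ᵥ y') = y' ⬝ᵥ (x ∘ π.symm) := fun y' => by
    rw [dotProduct_mulVec, permMatrix_eq_toMatrix, PEquiv.vecMul_toMatrix_toPEquiv,
      dotProduct_comm]
  simp only [IsNash, one_mulVec, hpayoff]
  constructor
  · rintro ⟨hx, hy, hrow, hcol⟩
    exact ⟨hx, hy, (hx.forall_dotProduct_le_iff).mp hrow, (hy.forall_dotProduct_le_iff).mp hcol⟩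
  · rintro ⟨hx, hy, hrow, hcol⟩
    exact ⟨hx, hy, (hx.forall_dotProduct_le_iff).mpr hrow, (hy.forall_dotProduct_le_iff).mpr hcol⟩

lemma isNash_uniformStrategy {S : Finset (Fin n)} (hS : S.Nonempty)
    (hπ : ∀ a, π a ∈ S ↔ a ∈ S) :
    IsNash 1 (permMatrix π) (uniformStrategy S) (uniformStrategy S) := by
  refine isNash_permMatrix_iff.mpr ⟨isMixed_uniformStrategy hS, isMixed_uniformStrategy hS,
    fun a ha b => uniformStrategy_le (uniformStrategy_pos_iff.mp ha) b,
    fun c hc d => uniformStrategy_le ?_ _⟩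
  rw [← hπ, apply_symm_apply]
  exact uniformStrategy_pos_iff.mp hc

lemma IsNash.eq_uniformStrategy_of_sameCycle (hπ : ∀ i j, π.SameCycle i j) {x y : Fin n → ℝ}
    (h : IsNash 1 (permMatrix π) x y) : x = uniformStrategy univ ∧ y = uniformStrategy univ := by
  obtain ⟨hx, hy, hrow, hcol⟩ := isNash_permMatrix_iff.mp h
  obtain ⟨c₀, -, hc₀⟩ := exists_max_image univ y (hy.exists_pos.imp fun _ _ => mem_univ _)
  have hmax_pos : ∀ c, (∀ b, y b ≤ y c) → 0 < y c := fun c hc =>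
    hy.exists_pos.elim fun b hb => hb.trans_le (hc b)
  have hclosed : Set.MapsTo π.symm {c | ∀ b, y b ≤ y c} {c | ∀ b, y b ≤ y c} := by
    intro c hc
    obtain ⟨a, ha⟩ := hx.exists_pos
    refine hrow _ (ha.trans_le ?_)
    simpa using hcol c (hmax_pos c hc) (π a)
  have hy_const : ∀ c b, y b ≤ y c := fun c => by
    obtain ⟨k, -, rfl⟩ := (hπ c₀ c).inv.exists_pow_eq'
    exact hclosed.perm_pow k fun b => hc₀ b (mem_univ b)
  refine ⟨hx.eq_uniformStrategy_univ fun a b => ?_,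
    hy.eq_uniformStrategy_univ fun a b => hy_const b a⟩
  simpa using hcol (π b) (hmax_pos _ (hy_const _)) (π a)

variable [NeZero n]

lemma ncard_isNash_permMatrix_eq_one_iff :
    {p : (Fin n → ℝ) × (Fin n → ℝ) | IsNash 1 (permMatrix π) p.1 p.2}.ncard = 1 ↔
      ∀ i j, π.SameCycle i j := by
  constructor
  · intro h i j
    by_contra hij
    obtain ⟨p, hp⟩ := Set.ncard_eq_one.mp h
    set S := univ.filter (π.SameCycle i)
    have horbit : (uniformStrategy S, uniformStrategy S) ∈ ({p} : Set _) :=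
      hp ▸ isNash_uniformStrategy ⟨i, by simp [S, Perm.SameCycle.refl]⟩ fun a => by simp [S]
    have huniv : (uniformStrategy univ, uniformStrategy univ) ∈ ({p} : Set _) :=
      hp ▸ isNash_uniformStrategy univ_nonempty fun a => by simp
    have heq : uniformStrategy S = uniformStrategy univ := congrArg Prod.fst
      ((Set.mem_singleton_iff.mp horbit).trans (Set.mem_singleton_iff.mp huniv).symm)
    have hj : 0 < uniformStrategy S j := heq ▸ uniformStrategy_pos_iff.mpr (mem_univ j)
    simp [uniformStrategy_pos_iff, S, hij] at hj
  · intro hπ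
    rw [Set.ncard_eq_one]
    refine ⟨(uniformStrategy univ, uniformStrategy univ), Set.eq_singleton_iff_unique_mem.mpr
      ⟨isNash_uniformStrategy univ_nonempty fun a => by simp, fun p hp => ?_⟩⟩
    obtain ⟨hx, hy⟩ := IsNash.eq_uniformStrategy_of_sameCycle hπ hp
    exact Prod.ext hx hy

lemma numOrbits_eq_one_iff :
    numOrbits π = 1 ↔ ∀ i j, π.SameCycle i j := by
  have hrange : {s : Set (Fin n) | ∃ i, s = {j | π.SameCycle i j}} =
      Set.range fun i => {j | π.SameCycle i j} := by
    ext s; simp [eq_comm]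
  rw [numOrbits, hrange, Set.ncard_eq_one]
  constructor
  · rintro ⟨s, hs⟩ i j
    have hi : {k | π.SameCycle i k} ∈ ({s} : Set _) := hs ▸ Set.mem_range_self i
    have hj : {k | π.SameCycle j k} ∈ ({s} : Set _) := hs ▸ Set.mem_range_self j
    have hij : {k | π.SameCycle j k} = {k | π.SameCycle i k} := hj.trans hi.symm
    change j ∈ {k | π.SameCycle i k}
    rw [← hij]
    exact Perm.SameCycle.refl π j
  · intro hπ
    have : (fun i => {j | π.SameCycle i j}) = fun _ => Set.univ :=
      funext fun i => Set.eq_univ_of_forall (hπ i)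
    exact ⟨Set.univ, this ▸ Set.range_const⟩

end PermGame

section Counting

variable {α : Type*} [Fintype α] [DecidableEq α]

lemma Equiv.Perm.forall_sameCycle_iff_cycleType_eq (hα : 2 ≤ Fintype.card α) (σ : Perm α) :
    (∀ x y, σ.SameCycle x y) ↔ σ.cycleType = {Fintype.card α} := by
  constructor
  · intro hσ
    have hmoved : ∀ x, σ x ≠ x := fun x hx =>
      let ⟨y, hy⟩ := Fintype.exists_ne_of_one_lt_card hα x
      hy ((hσ x y).eq_of_left hx).symm
    have hsupp : σ.support = univ := eq_univ_of_forall fun x => mem_support.mpr (hmoved x)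
    obtain ⟨x⟩ : Nonempty α := Fintype.card_pos_iff.mp (by omega)
    have hcycle : σ.IsCycle := ⟨x, hmoved x, fun y _ => hσ x y⟩
    rw [hcycle.cycleType, hsupp, card_univ]
  · intro h x y
    have hcycle : σ.IsCycle := card_cycleType_eq_one.mp (by simp [h])
    have hsupp : σ.support = univ :=
      eq_univ_of_card _ (by simpa [hcycle.cycleType] using h)
    exact hcycle.sameCycle (mem_support.mp (hsupp ▸ mem_univ x))
      (mem_support.mp (hsupp ▸ mem_univ y))

lemma Equiv.Perm.ncard_forall_sameCycle :
    {σ : Perm α | ∀ x y, σ.SameCycle x y}.ncard = (Fintype.card α - 1).factorial := by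
  rcases lt_or_ge (Fintype.card α) 2 with hα | hα
  · have : Subsingleton α := Fintype.card_le_one_iff_subsingleton.mp (by omega)
    have hall (σ : Perm α) (x y : α) : σ.SameCycle x y := Subsingleton.elim x y ▸ .refl σ x
    simp only [hall, implies_true, Set.ofPred_true, Set.ncard_univ, Nat.card_unique]
    exact (Nat.factorial_eq_one.mpr (by omega)).symm
  · have hset : {σ : Perm α | ∀ x y, σ.SameCycle x y} =
        ↑({σ | σ.cycleType = {Fintype.card α}} : Finset (Perm α)) := by
      ext σ
      simp [forall_sameCycle_iff_cycleType_eq hα]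
    rw [hset, Set.ncard_coe_finset, card_of_cycleType_singleton hα le_rfl, Nat.choose_self,
      mul_one]

end Counting

/-- For a uniformly random permutation `π` of `{1,…,n}` (`n ≥ 1`), the
probability that the permutation game `(I, I^π)` has exactly one Nash
equilibrium equals `1/n`; equivalently, the number of single-cycle permutations
is `(n−1)!`. -/
theorem stmt9 {n : ℕ} (hn : 1 ≤ n) :
    (({π : Equiv.Perm (Fin n) |
        {p : (Fin n → ℝ) × (Fin n → ℝ) |
          IsNash (1 : Matrix (Fin n) (Fin n) ℝ) (permMatrix π) p.1 p.2}.ncard = 1}.ncard : ℝ)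
      / n.factorial = 1 / n) ∧
    {π : Equiv.Perm (Fin n) | numOrbits π = 1}.ncard = (n - 1).factorial := by
  have : NeZero n := ⟨by omega⟩
  have hcount := Perm.ncard_forall_sameCycle (α := Fin n)
  rw [Fintype.card_fin] at hcount
  simp only [ncard_isNash_permMatrix_eq_one_iff, numOrbits_eq_one_iff, hcount]
  refine ⟨?_, trivial⟩
  rw [← Nat.mul_factorial_pred (NeZero.ne n), Nat.cast_mul,
    div_mul_cancel_right₀ (Nat.cast_ne_zero.mpr (Nat.factorial_ne_zero _)), one_div]
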